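/- arXiv:2312.00152 — 3 statements merged into one kernel-verified Lean document; each statement's English description precedes it below -/
import Mathlib

section
/- Let v be a Schwartz function on ℝ. Then ∫_ℝ x v'(x) (|D|v)(x) dx = 0, where |D| is the Fourier multiplier with symbol |ξ|. -/
open MeasureTheory Complex Real SchwartzMap
open scoped FourierTransform ComplexConjugate

noncomputable def ofRealS (v : SchwartzMap ℝ ℝ) : SchwartzMap ℝ ℂ :=
  bilinLeftCLM (ContinuousLinearMap.lsmul ℝ ℝ (E := ℂ))
    (Function.HasTemperateGrowth.const (1 : ℂ)) v

@[simp] lemma ofRealS_apply (v : SchwartzMap ℝ ℝ) (x : ℝ) : ofRealS v x = (v x : ℂ) := by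
  show (v x : ℝ) • (1 : ℂ) = (v x : ℂ)
  rw [Complex.real_smul, mul_one]

noncomputable def xMulS (f : SchwartzMap ℝ ℂ) : SchwartzMap ℝ ℂ :=
  bilinLeftCLM (ContinuousLinearMap.mul ℝ ℂ)
    (Complex.ofRealCLM.hasTemperateGrowth) f

@[simp] lemma xMulS_apply (f : SchwartzMap ℝ ℂ) (x : ℝ) : xMulS f x = f x * (x : ℂ) := rfl


lemma twoPiI_ne : (2 * π * I : ℂ) ≠ 0 := by
  simp [Real.pi_ne_zero, I_ne_zero, Complex.ofReal_ne_zero]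

lemma norm_mul_integrable (f : SchwartzMap ℝ ℂ) :
    Integrable (fun x : ℝ => ‖x‖ * ‖f x‖) := by
  simpa using f.integrable_pow_mul (μ := volume) 1

lemma fourier_mul_deriv (vc : SchwartzMap ℝ ℂ) (ξ : ℝ) :
    𝓕 (fun x : ℝ => deriv (⇑vc) x * (x : ℂ)) ξ
      = -(𝓕 (⇑vc) ξ + (ξ : ℂ) * deriv (𝓕 (⇑vc)) ξ) := by
  have hdv : deriv (⇑vc) = ⇑(derivCLM ℂ ℂ vc) := by
    ext x; exact (derivCLM_apply ℂ vc x).symm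
  have hint_dv : Integrable (deriv (⇑vc)) := by rw [hdv]; exact (derivCLM ℂ ℂ vc).integrable
  have hint_xdv : Integrable (fun x : ℝ => x • deriv (⇑vc) x) := by
    have h2 := (xMulS (derivCLM ℂ ℂ vc)).integrable (μ := volume)
    apply h2.congr
    filter_upwards with x
    simp only [xMulS_apply, derivCLM_apply, Complex.real_smul]
    ring
  set u : ℝ → ℂ := 𝓕 (⇑vc) with hu
  have hu_diff : Differentiable ℝ u :=
    Real.differentiable_fourier vc.integrable (norm_mul_integrable vc)
  -- A = 𝓕 (deriv vc)
  have hA : 𝓕 (deriv (⇑vc)) = fun η : ℝ => (2 * π * I * η) • u η :=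
    Real.fourier_deriv vc.integrable vc.differentiable hint_dv
  have hderivA : deriv (𝓕 (deriv (⇑vc))) ξ
      = 𝓕 (fun x : ℝ => (-2 * π * I * x) • deriv (⇑vc) x) ξ := by
    rw [Real.deriv_fourier hint_dv hint_xdv]
  have hlhs : deriv (𝓕 (deriv (⇑vc))) ξ = 2 * π * I * (u ξ + ξ * deriv u ξ) := by
    rw [hA]
    have h1 : HasDerivAt (fun η : ℝ => ((2 * π * I * η : ℂ))) (2 * π * I) ξ := by
      simpa using ((hasDerivAt_id ξ).ofReal_comp).const_mul (2 * π * I : ℂ)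
    have h2 : HasDerivAt (fun η : ℝ => (2 * π * I * η) • u η)
        (2 * π * I * u ξ + (2 * π * I * ξ) * deriv u ξ) ξ := by
      simpa [smul_eq_mul, Pi.mul_def] using h1.mul (hu_diff ξ).hasDerivAt
    rw [h2.deriv]; ring
  have hrhs : 𝓕 (fun x : ℝ => (-2 * π * I * x) • deriv (⇑vc) x) ξ
      = (-(2 * π * I)) * 𝓕 (fun x : ℝ => deriv (⇑vc) x * (x : ℂ)) ξ := by
    have : (fun x : ℝ => (-2 * π * I * x) • deriv (⇑vc) x)
        = (-(2 * π * I) : ℂ) • fun x : ℝ => deriv (⇑vc) x * (x : ℂ) := by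
      funext x
      simp only [Pi.smul_apply, smul_eq_mul]
      ring
    rw [this]
    exact congrFun (VectorFourier.fourierIntegral_const_smul _ _ _ _ _) ξ
  have := hderivA.symm.trans hlhs
  rw [hrhs] at this
  refine mul_left_cancel₀ twoPiI_ne ?_
  linear_combination -this

lemma fourier_conj (v : SchwartzMap ℝ ℝ) (ξ : ℝ) :
    𝓕 (fun x : ℝ => (v x : ℂ)) (-ξ) = conj (𝓕 (fun x : ℝ => (v x : ℂ)) ξ) := by
  rw [Real.fourier_real_eq_integral_exp_smul,
    Real.fourier_real_eq_integral_exp_smul, ← integral_conj]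
  congr 1; funext x
  simp only [smul_eq_mul, map_mul, Complex.conj_ofReal, ← Complex.exp_conj, Complex.conj_I]
  push_cast
  ring_nf

lemma mult_formula {f g : ℝ → ℂ} (hf : Integrable f) (hg : Integrable g) :
    ∫ ξ : ℝ, 𝓕 f ξ * g ξ = ∫ x : ℝ, f x * 𝓕 g x := by
  have hflip : (innerₗ ℝ).flip = innerₗ ℝ := by
    apply LinearMap.ext; intro x; apply LinearMap.ext; intro y
    exact real_inner_comm x y
  have h := VectorFourier.integral_bilin_fourierIntegral_eq_flip
    (E := ℂ) (F := ℂ) (G := ℂ) (μ := volume) (ν := volume) (L := innerₗ ℝ)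
    (ContinuousLinearMap.mul ℂ ℂ) Real.continuous_fourierChar
    continuous_inner hf hg
  rw [hflip] at h
  exact h

lemma hasDerivAt_mul_abs (ξ : ℝ) : HasDerivAt (fun x : ℝ => x * |x|) (2 * |ξ|) ξ := by
  rcases lt_trichotomy ξ 0 with h | h | h
  · have : (fun x : ℝ => x * |x|) =ᶠ[nhds ξ] fun x => -(x * x) := by
      filter_upwards [Iio_mem_nhds h] with x hx
      rw [abs_of_neg hx]; ring
    have h2 : HasDerivAt (fun x : ℝ => -(x * x)) (2 * |ξ|) ξ := by
      have := ((hasDerivAt_id ξ).mul (hasDerivAt_id ξ)).neg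
      simpa [abs_of_neg h, two_mul, Pi.mul_def, Pi.neg_def] using this
    exact h2.congr_of_eventuallyEq this
  · subst h
    rw [hasDerivAt_iff_tendsto_slope]
    have : ∀ x : ℝ, x ≠ 0 → slope (fun x : ℝ => x * |x|) 0 x = |x| := by
      intro x hx
      rw [slope_def_field]; simp only [zero_mul, sub_zero]; field_simp
    have key : Filter.Tendsto (fun x : ℝ => |x|) (nhdsWithin 0 {0}ᶜ) (nhds (2 * |0|)) := by
      have h0 : Filter.Tendsto (fun x : ℝ => |x|) (nhdsWithin (0:ℝ) {(0:ℝ)}ᶜ) (nhds |(0:ℝ)|) :=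
        (_root_.continuous_abs.tendsto (0:ℝ)).mono_left nhdsWithin_le_nhds
      simpa using h0
    apply key.congr'
    filter_upwards [self_mem_nhdsWithin] with x hx
    exact (this x hx).symm
  · have : (fun x : ℝ => x * |x|) =ᶠ[nhds ξ] fun x => x * x := by
      filter_upwards [Ioi_mem_nhds h] with x hx
      rw [abs_of_pos hx]
    have h2 : HasDerivAt (fun x : ℝ => x * x) (2 * |ξ|) ξ := by
      have := (hasDerivAt_id ξ).mul (hasDerivAt_id ξ)
      simpa [abs_of_pos h, two_mul, Pi.mul_def] using this
    exact h2.congr_of_eventuallyEq this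

lemma integral_deriv_zero {G G' : ℝ → ℂ} (hd : ∀ x : ℝ, HasDerivAt G (G' x) x)
    (hint : Integrable G') (htop : Filter.Tendsto G Filter.atTop (nhds 0))
    (hbot : Filter.Tendsto G Filter.atBot (nhds 0)) : ∫ x : ℝ, G' x = 0 := by
  rw [← intervalIntegral.integral_Iic_add_Ioi (b := 0) hint.integrableOn hint.integrableOn]
  rw [MeasureTheory.integral_Ioi_of_hasDerivAt_of_tendsto
      (hd 0).continuousAt.continuousWithinAt (fun x _ => hd x) hint.integrableOn htop,
    MeasureTheory.integral_Iic_of_hasDerivAt_of_tendsto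
      (hd 0).continuousAt.continuousWithinAt (fun x _ => hd x) hint.integrableOn hbot]
  ring

lemma schwartz_mul_integrable (f g : SchwartzMap ℝ ℂ) :
    Integrable (fun x : ℝ => f x * g x) := by
  obtain ⟨C, -, hC⟩ := g.decay 0 0
  refine ((f.integrable (μ := volume)).norm.mul_const C).mono'
    ((f.continuous.mul g.continuous).aestronglyMeasurable) ?_
  filter_upwards with x
  rw [norm_mul]
  have := hC x
  simp only [pow_zero, one_mul, norm_iteratedFDeriv_zero] at this
  exact mul_le_mul_of_nonneg_left this (norm_nonneg _)

lemma conj_integrable {h : ℝ → ℂ} (hh : Integrable h) :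
    Integrable (fun x => conj (h x)) := by
  have := ((Complex.conjCLE : ℂ ≃L[ℝ] ℂ).toContinuousLinearMap).integrable_comp hh
  exact this.congr (by filter_upwards with x; rfl)

lemma conj_hasDerivAt {u : ℝ → ℂ} {u' : ℂ} {x : ℝ} (hu : HasDerivAt u u' x) :
    HasDerivAt (fun y => conj (u y)) (conj u') x := by
  have := ((Complex.conjCLE : ℂ ≃L[ℝ] ℂ).toContinuousLinearMap).hasFDerivAt.comp_hasDerivAt x hu
  exact this

lemma schwartz_tendsto_zero_atTop (f : SchwartzMap ℝ ℂ) :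
    Filter.Tendsto (⇑f) Filter.atTop (nhds 0) := by
  have h := zero_at_infty (f : SchwartzMap ℝ ℂ)
  refine h.mono_left ?_
  rw [cocompact_eq_atBot_atTop]
  exact le_sup_right

lemma schwartz_tendsto_zero_atBot (f : SchwartzMap ℝ ℂ) :
    Filter.Tendsto (⇑f) Filter.atBot (nhds 0) := by
  have h := zero_at_infty (f : SchwartzMap ℝ ℂ)
  refine h.mono_left ?_
  rw [cocompact_eq_atBot_atTop]
  exact le_sup_left

/-- For a Schwartz function `v`, `∫ x v'(x) (|D|v)(x) dx = 0`, where `|D|v = w` is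
characterized on the Fourier side by `ŵ(ξ) = |ξ| v̂(ξ)`. -/
theorem integral_x_deriv_absD_eq_zero (v w : SchwartzMap ℝ ℝ)
    (hw : ∀ ξ : ℝ, FourierTransform.fourier (fun x => (w x : ℂ)) ξ =
      ((|ξ| : ℝ) : ℂ) * FourierTransform.fourier (fun x => (v x : ℂ)) ξ) :
    ∫ x : ℝ, x * deriv (⇑v) x * w x = 0 := by
  set vc := ofRealS v with hvcdef
  set wc := ofRealS w with hwcdef
  have hvc : ⇑vc = fun x : ℝ => ((v x : ℝ) : ℂ) := funext (ofRealS_apply v)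
  have hwc : ⇑wc = fun x : ℝ => ((w x : ℝ) : ℂ) := funext (ofRealS_apply w)
  set U := fourierTransformCLM ℂ vc with hUdef
  have hU : ⇑U = 𝓕 ⇑vc := rfl
  set U' := derivCLM ℂ ℂ U with hU'def
  have hU' : ∀ ξ : ℝ, U' ξ = deriv (⇑U) ξ := fun ξ => derivCLM_apply ℂ U ξ
  set fc := xMulS (derivCLM ℂ ℂ vc) with hfcdef
  have hfc : ⇑fc = fun x : ℝ => deriv (⇑vc) x * (x : ℂ) := by
    funext x; rw [xMulS_apply, derivCLM_apply]
  set gS := (FourierTransform.fourierCLE ℂ (SchwartzMap ℝ ℂ)).symm wc with hgSdef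
  have hFgS : 𝓕 ⇑gS = ⇑wc := by
    have h1 : FourierTransform.fourierCLE ℂ (SchwartzMap ℝ ℂ) gS = wc := (FourierTransform.fourierCLE ℂ (SchwartzMap ℝ ℂ)).apply_symm_apply wc
    calc 𝓕 ⇑gS = ⇑(FourierTransform.fourierCLE ℂ (SchwartzMap ℝ ℂ) gS) := rfl
    _ = ⇑wc := by rw [h1]
  have hgS : ∀ ξ : ℝ, gS ξ = ((|ξ| : ℝ) : ℂ) * conj (U ξ) := by
    intro ξ
    have h1 : gS ξ = 𝓕 ⇑wc (-ξ) := by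
      rw [hgSdef, fourierTransformCLE_symm_apply, fourierInv_coe,
        Real.fourierInv_eq_fourier_neg]
    rw [h1, hwc, hw (-ξ), abs_neg, fourier_conj v ξ, hU, hvc]
  have hderiv_vc : ∀ x : ℝ, deriv (⇑vc) x = ((deriv (⇑v) x : ℝ) : ℂ) := by
    intro x
    have h2 : HasDerivAt (fun y : ℝ => ((v y : ℝ) : ℂ)) ((deriv (⇑v) x : ℝ) : ℂ) x := by
      exact_mod_cast (v.differentiable.differentiableAt.hasDerivAt).ofReal_comp (z := x)
    rw [hvc]; exact h2.deriv
  have hcast : ∫ x : ℝ, ((x * deriv (⇑v) x * w x : ℝ) : ℂ)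
      = ((∫ x : ℝ, x * deriv (⇑v) x * w x : ℝ) : ℂ) := integral_ofReal
  have hreal : ((∫ x : ℝ, x * deriv (⇑v) x * w x : ℝ) : ℂ) = ∫ x : ℝ, fc x * wc x := by
    rw [← hcast]
    congr 1; funext x
    rw [show fc x = deriv (⇑vc) x * (x : ℂ) from by rw [hfc],
      show wc x = ((w x : ℝ) : ℂ) from by rw [hwc], hderiv_vc x]
    push_cast
    ring
  set h : ℝ → ℂ := fun ξ : ℝ => 𝓕 (⇑fc) ξ * gS ξ with hhdef
  have hI : ∫ x : ℝ, fc x * wc x = ∫ ξ : ℝ, h ξ := by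
    have h1 := mult_formula (f := ⇑fc) (g := ⇑gS) fc.integrable gS.integrable
    rw [hFgS] at h1
    exact h1.symm
  have hint_h : Integrable h := by
    have h1 : ⇑(fourierTransformCLM ℂ fc) = 𝓕 ⇑fc := rfl
    apply (schwartz_mul_integrable (fourierTransformCLM ℂ fc) gS).congr
    filter_upwards with ξ
    rw [hhdef, h1]
  have hFfc : ∀ ξ : ℝ, 𝓕 (⇑fc) ξ = -(U ξ + (ξ : ℂ) * U' ξ) := by
    intro ξ
    rw [hfc, fourier_mul_deriv vc ξ, ← hU, hU' ξ]
  have hGderiv : ∀ ξ : ℝ, HasDerivAt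
      (fun ξ : ℝ => ((ξ * |ξ| : ℝ) : ℂ) * (U ξ * conj (U ξ))) (-(h ξ + conj (h ξ))) ξ := by
    intro ξ
    have hu : HasDerivAt (⇑U) (U' ξ) ξ := by
      rw [hU' ξ]; exact U.differentiable.differentiableAt.hasDerivAt
    have hcu : HasDerivAt (fun η => conj (U η)) (conj (U' ξ)) ξ := conj_hasDerivAt hu
    have hm : HasDerivAt (fun η : ℝ => ((η * |η| : ℝ) : ℂ)) ((2 * |ξ| : ℝ) : ℂ) ξ :=
      (hasDerivAt_mul_abs ξ).ofReal_comp
    have hprod := hm.mul (hu.mul hcu)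
    refine hprod.congr_deriv ?_
    rw [hhdef]
    simp only [Pi.mul_apply, hFfc ξ, hgS ξ, map_mul, map_add, map_neg, Complex.conj_conj,
      Complex.conj_ofReal]
    push_cast
    ring
  have hint_conj : Integrable (fun ξ => conj (h ξ)) := conj_integrable hint_h
  have hint_D : Integrable (fun ξ => -(h ξ + conj (h ξ))) := (hint_h.add hint_conj).neg
  obtain ⟨C, -, hC⟩ := U.decay 2 0
  have hbound : ∀ ξ : ℝ, ‖((ξ * |ξ| : ℝ) : ℂ) * (U ξ * conj (U ξ))‖ ≤ C * ‖U ξ‖ := by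
    intro ξ
    have h1 := hC ξ
    simp only [norm_iteratedFDeriv_zero] at h1
    have h2 : ‖((ξ * |ξ| : ℝ) : ℂ) * (U ξ * conj (U ξ))‖
        = (‖ξ‖ ^ 2 * ‖U ξ‖) * ‖U ξ‖ := by
      rw [norm_mul, norm_mul, Complex.norm_real, RCLike.norm_conj]
      have h3 : ‖ξ * _root_.abs ξ‖ = ‖ξ‖ ^ 2 := by
        rw [Real.norm_eq_abs, _root_.abs_mul, _root_.abs_abs, Real.norm_eq_abs, sq]
      rw [h3]
      ring
    rw [h2]
    exact mul_le_mul_of_nonneg_right h1 (norm_nonneg _)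
  have hUtop := schwartz_tendsto_zero_atTop U
  have hUbot := schwartz_tendsto_zero_atBot U
  have hCU_top : Filter.Tendsto (fun ξ : ℝ => C * ‖U ξ‖) Filter.atTop (nhds 0) := by
    simpa using (hUtop.norm.const_mul C)
  have hCU_bot : Filter.Tendsto (fun ξ : ℝ => C * ‖U ξ‖) Filter.atBot (nhds 0) := by
    simpa using (hUbot.norm.const_mul C)
  have htop : Filter.Tendsto (fun ξ : ℝ => ((ξ * |ξ| : ℝ) : ℂ) * (U ξ * conj (U ξ)))
      Filter.atTop (nhds 0) := squeeze_zero_norm hbound hCU_top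
  have hbot : Filter.Tendsto (fun ξ : ℝ => ((ξ * |ξ| : ℝ) : ℂ) * (U ξ * conj (U ξ)))
      Filter.atBot (nhds 0) := squeeze_zero_norm hbound hCU_bot
  have hDzero : ∫ ξ : ℝ, -(h ξ + conj (h ξ)) = 0 :=
    integral_deriv_zero hGderiv hint_D htop hbot
  have hJ : (∫ ξ : ℝ, h ξ) + conj (∫ ξ : ℝ, h ξ) = 0 := by
    rw [← integral_conj, ← integral_add hint_h hint_conj]
    rw [integral_neg] at hDzero
    exact neg_eq_zero.mp hDzero
  have hJr : ((∫ x : ℝ, x * deriv (⇑v) x * w x : ℝ) : ℂ) = ∫ ξ : ℝ, h ξ := by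
    rw [hreal, hI]
  rw [← hJr, Complex.conj_ofReal, ← Complex.ofReal_add] at hJ
  have := Complex.ofReal_eq_zero.mp hJ
  linarith
end

section
/- For the pure KdV case (α = 0, β > 0): any Schwartz solution v of −c v − β v'' + v²/2 = 0 with c ≥ 0 is identically zero. In particular KdV (written as u_t + u u_x − β u_xxx = 0) has no nontrivial solitary waves with nonnegative speed. -/
open Filter Set

theorem kdv_no_solitary_wave_nonneg_speed (β c : ℝ) (hβ : 0 < β) (hc : 0 ≤ c)
    (v : SchwartzMap ℝ ℝ)
    (heq : ∀ x : ℝ, -c * v x - β * deriv (deriv (⇑v)) x + (v x) ^ 2 / 2 = 0) :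
    ∀ x : ℝ, v x = 0 := by
  have hw : ⇑(SchwartzMap.derivCLM ℝ ℝ v) = deriv ⇑v := funext fun x => SchwartzMap.derivCLM_apply ℝ v x
  have hwdiff : Differentiable ℝ (deriv ⇑v) := hw ▸ (SchwartzMap.derivCLM ℝ ℝ v).differentiable
  -- first integral
  set E : ℝ → ℝ := fun x => -c * v x ^ 2 / 2 - β * deriv ⇑v x ^ 2 / 2 + v x ^ 3 / 6 with hEdef
  have hder : ∀ x, HasDerivAt E 0 x := by
    intro x
    have h1 : HasDerivAt ⇑v (deriv ⇑v x) x := v.differentiable.differentiableAt.hasDerivAt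
    have h2 : HasDerivAt (deriv ⇑v) (deriv (deriv ⇑v) x) x := (hwdiff x).hasDerivAt
    have hE : HasDerivAt E
        (-c * (2 * v x ^ 1 * deriv ⇑v x) / 2 - β * (2 * deriv ⇑v x ^ 1 * deriv (deriv ⇑v) x) / 2
          + 3 * v x ^ 2 * deriv ⇑v x / 6) x :=
      ((((h1.pow 2).const_mul (-c)).div_const 2).sub
        (((h2.pow 2).const_mul β).div_const 2)).add ((h1.pow 3).div_const 6)
    convert hE using 1
    have h := heq x
    linear_combination (-(deriv ⇑v x)) * h
  have hEdiff : Differentiable ℝ E := fun x => (hder x).differentiableAt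
  -- E tends to 0 at infinity
  have htv : Tendsto ⇑v atTop (nhds 0) :=
    (zero_at_infty v).mono_left (by rw [cocompact_eq_atBot_atTop]; exact le_sup_right)
  have htw : Tendsto (deriv ⇑v) atTop (nhds 0) :=
    hw ▸ (zero_at_infty (SchwartzMap.derivCLM ℝ ℝ v)).mono_left
      (by rw [cocompact_eq_atBot_atTop]; exact le_sup_right)
  have htE : Tendsto E atTop (nhds (-c * (0:ℝ) ^ 2 / 2 - β * (0:ℝ) ^ 2 / 2 + (0:ℝ) ^ 3 / 6)) :=
    ((((htv.pow 2).const_mul (-c)).div_const 2).sub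
      (((htw.pow 2).const_mul β).div_const 2)).add ((htv.pow 3).div_const 6)
  have hE0 : ∀ x, E x = 0 := by
    intro x
    have hconst : ∀ y, E y = E x := fun y =>
      is_const_of_deriv_eq_zero hEdiff (fun z => (hder z).deriv) y x
    have : Tendsto E atTop (nhds (E x)) := by
      rw [show E = fun _ => E x from funext hconst]; exact tendsto_const_nhds
    have := tendsto_nhds_unique this htE
    simpa using this
  -- pointwise consequences
  have hkey : ∀ x, v x ^ 2 * (v x - 3 * c) = 3 * β * deriv ⇑v x ^ 2 := by
    intro x
    have h := hE0 x
    simp only [hEdef] at h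
    linear_combination 6 * h
  have hvnonneg : ∀ x, 0 ≤ v x := by
    intro x
    have h := hE0 x
    simp only [hEdef] at h
    by_contra h'
    push_neg at h'
    have h3 : v x ^ 3 < 0 := Odd.pow_neg ⟨1, by norm_num⟩ h'
    linarith [mul_nonneg hc (sq_nonneg (v x)), mul_nonneg hβ.le (sq_nonneg (deriv ⇑v x))]
  -- decay bound
  obtain ⟨C, hC0, hC⟩ := v.decay 1 0
  simp only [norm_iteratedFDeriv_zero, pow_one] at hC
  rcases eq_or_lt_of_le hc with hc0 | hcpos
  · -- c = 0 : convexity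
    have hconv : ConvexOn ℝ univ ⇑v := by
      apply convexOn_univ_of_deriv2_nonneg v.differentiable hwdiff
      intro x
      have h := heq x
      rw [← hc0] at h
      have : deriv^[2] ⇑v x = deriv (deriv ⇑v) x := by
        simp [Function.iterate_succ, Function.comp]
      rw [this]
      nlinarith [sq_nonneg (v x)]
    intro x
    refine le_antisymm ?_ (hvnonneg x)
    have hle : ∀ ε > (0:ℝ), v x ≤ ε := by
      intro ε hε
      set R : ℝ := max (|x| + 1) (C / ε + 1) with hR
      have hR1 : |x| + 1 ≤ R := le_max_left _ _
      have hR2 : C / ε + 1 ≤ R := le_max_right _ _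
      have hRpos : 0 < R := lt_of_lt_of_le (by positivity) hR1
      have hmem : x ∈ segment ℝ (-R) R := by
        rw [segment_eq_Icc (by linarith : -R ≤ R)]
        constructor
        · have := abs_le.mp (le_refl |x|) |>.1
          have : -|x| ≤ x := neg_abs_le x
          linarith [abs_nonneg x]
        · have : x ≤ |x| := le_abs_self x
          linarith
      have hbound : v x ≤ max (v (-R)) (v R) :=
        hconv.le_on_segment (mem_univ _) (mem_univ _) hmem
      have hCR : C / ε < R := by
        have : 0 < C / ε + 1 - C / ε := by norm_num
        linarith
      have hCepsR : C < ε * R := by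
        have := (div_lt_iff₀ hε).mp hCR
        linarith [mul_comm R ε]
      have hvR : v R ≤ ε := by
        have h1 := hC R
        rw [Real.norm_eq_abs, Real.norm_eq_abs, abs_of_pos hRpos] at h1
        have h2 : v R ≤ |v R| := le_abs_self _
        nlinarith
      have hvmR : v (-R) ≤ ε := by
        have h1 := hC (-R)
        rw [Real.norm_eq_abs, Real.norm_eq_abs, abs_neg, abs_of_pos hRpos] at h1
        have h2 : v (-R) ≤ |v (-R)| := le_abs_self _
        nlinarith
      exact hbound.trans (max_le hvmR hvR)
    exact le_of_forall_pos_le_add (by intro ε hε; simpa using hle ε hε)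
  · -- c > 0 : clopen argument
    set S : Set ℝ := {x | 0 < v x} with hS
    have hSopen : IsOpen S := isOpen_lt continuous_const v.continuous
    have hSeq : S = {x | 3 * c ≤ v x} := by
      ext x
      simp only [hS, mem_setOf_eq]
      constructor
      · intro hx
        have h := hkey x
        nlinarith [mul_pos hx hx, mul_nonneg (mul_nonneg (by norm_num : (0:ℝ) ≤ 3) hβ.le) (sq_nonneg (deriv ⇑v x))]
      · intro hx; linarith
    have hSclosed : IsClosed S := hSeq ▸ isClosed_le continuous_const v.continuous
    have := (isClopen_iff.mp ⟨hSclosed, hSopen⟩)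
    rcases this with hempty | huniv
    · intro x
      refine le_antisymm ?_ (hvnonneg x)
      by_contra h
      push_neg at h
      exact (eq_empty_iff_forall_notMem.mp hempty x) h
    · exfalso
      set x0 : ℝ := C / (3 * c) + 1 with hx0
      have hx0pos : 0 < x0 := by positivity
      have hvx0 : 3 * c ≤ v x0 := by
        rw [hSeq] at huniv
        exact (huniv ▸ mem_univ x0 : x0 ∈ {x | 3 * c ≤ v x})
      have h1 := hC x0
      rw [Real.norm_eq_abs, Real.norm_eq_abs, abs_of_pos hx0pos] at h1
      have h2 : v x0 ≤ |v x0| := le_abs_self _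
      have h3 : x0 * (3 * c) ≤ C :=
        le_trans (mul_le_mul_of_nonneg_left (hvx0.trans (le_abs_self _)) hx0pos.le) h1
      have h4 : x0 * (3 * c) = C + 3 * c := by
        rw [hx0]; field_simp
      linarith
end

section
/- For the pure Benjamin–Ono case (β = 0, α > 0): any Schwartz solution v of −c v − α|D|v + v²/2 = 0 with c ≤ 0 is identically zero, i.e. BO has no nontrivial solitary waves with nonpositive speed. -/
open MeasureTheory Filter Topology Complex FourierTransform

/-- BO has no nontrivial solitary waves with nonpositive speed; `w = |D|v` is
characterized on the Fourier side. -/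
theorem bo_no_solitary_wave_nonpos_speed (α c : ℝ) (hα : 0 < α) (hc : c ≤ 0)
    (v w : SchwartzMap ℝ ℝ)
    (hw : ∀ ξ : ℝ, FourierTransform.fourier (fun x => (w x : ℂ)) ξ =
      ((|ξ| : ℝ) : ℂ) * FourierTransform.fourier (fun x => (v x : ℂ)) ξ)
    (heq : ∀ x : ℝ, -c * v x - α * w x + (v x) ^ 2 / 2 = 0) :
    ∀ x : ℝ, v x = 0 := by
  set f : ℝ → ℂ := fun ξ => FourierTransform.fourier (fun x => (v x : ℂ)) ξ with hfdef
  have hvI : Integrable (fun x => (v x : ℂ)) := (v.integrable).ofReal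
  have hwI : Integrable (fun x => (w x : ℂ)) := (w.integrable).ofReal
  have hxI : ∀ u : SchwartzMap ℝ ℝ, Integrable (fun x : ℝ => x • (u x : ℂ)) := by
    intro u
    have h1 : Integrable (fun x : ℝ => ‖x‖ ^ 1 * ‖u x‖) := u.integrable_pow_mul volume 1
    refine h1.mono' ?_ ?_
    · exact (continuous_id.smul (Complex.continuous_ofReal.comp u.continuous)).aestronglyMeasurable
    · filter_upwards with x
      simp [norm_smul, abs_mul]
  -- derivative of 𝓕 w at 0 exists
  have hDw := Real.hasDerivAt_fourier hwI (hxI w) 0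
  -- continuity of f at 0
  have hCf : ContinuousAt f 0 :=
    (Real.hasDerivAt_fourier hvI (hxI v) 0).continuousAt
  -- 𝓕 w = fun ξ => |ξ| * f ξ
  have hgw : (𝓕 (fun x => (w x : ℂ))) = fun ξ => ((|ξ| : ℝ) : ℂ) * f ξ := by
    funext ξ; exact hw ξ
  rw [hgw] at hDw
  set d : ℂ := 𝓕 (fun x : ℝ => (-2 * Real.pi * I * x) • (w x : ℂ)) 0
  -- slope tendsto
  have hslope : Tendsto (slope (fun ξ : ℝ => ((|ξ| : ℝ) : ℂ) * f ξ) 0) (𝓝[≠] 0) (𝓝 d) :=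
    hasDerivAt_iff_tendsto_slope.mp hDw
  have hright : Tendsto (slope (fun ξ : ℝ => ((|ξ| : ℝ) : ℂ) * f ξ) 0) (𝓝[>] 0) (𝓝 d) :=
    hslope.mono_left (nhdsWithin_mono _ (fun x hx => ne_of_gt hx))
  have hleft : Tendsto (slope (fun ξ : ℝ => ((|ξ| : ℝ) : ℂ) * f ξ) 0) (𝓝[<] 0) (𝓝 d) :=
    hslope.mono_left (nhdsWithin_mono _ (fun x hx => ne_of_lt hx))
  have hfr : Tendsto f (𝓝[>] (0:ℝ)) (𝓝 (f 0)) :=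
    (hCf.tendsto).mono_left nhdsWithin_le_nhds
  have hfl : Tendsto f (𝓝[<] (0:ℝ)) (𝓝 (f 0)) :=
    (hCf.tendsto).mono_left nhdsWithin_le_nhds
  -- on the right, slope = f
  have heq_r : slope (fun ξ : ℝ => ((|ξ| : ℝ) : ℂ) * f ξ) 0 =ᶠ[𝓝[>] (0:ℝ)] f := by
    filter_upwards [self_mem_nhdsWithin] with ξ (hξ : 0 < ξ)
    have : slope (fun ξ : ℝ => ((|ξ| : ℝ) : ℂ) * f ξ) 0 ξ
        = (ξ⁻¹ : ℝ) • (((|ξ| : ℝ) : ℂ) * f ξ) := by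
      simp [slope, abs_of_pos]
    rw [this, abs_of_pos hξ]
    rw [real_smul]
    push_cast
    rw [inv_mul_eq_div]
    exact mul_div_cancel_left₀ _ (by exact_mod_cast hξ.ne')
  have heq_l : slope (fun ξ : ℝ => ((|ξ| : ℝ) : ℂ) * f ξ) 0 =ᶠ[𝓝[<] (0:ℝ)] (fun ξ => -f ξ) := by
    filter_upwards [self_mem_nhdsWithin] with ξ (hξ : ξ < 0)
    have : slope (fun ξ : ℝ => ((|ξ| : ℝ) : ℂ) * f ξ) 0 ξ
        = (ξ⁻¹ : ℝ) • (((|ξ| : ℝ) : ℂ) * f ξ) := by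
      simp [slope]
    rw [this, abs_of_neg hξ]
    rw [real_smul]
    push_cast
    have hξ' : (ξ : ℂ) ≠ 0 := by exact_mod_cast ne_of_lt hξ
    rw [inv_mul_eq_div, neg_mul, neg_div, neg_inj]
    exact mul_div_cancel_left₀ _ hξ'
  have hd1 : d = f 0 := tendsto_nhds_unique (hright.congr' heq_r) hfr
  have hd2 : d = -f 0 := by
    have : Tendsto (fun ξ => -f ξ) (𝓝[<] (0:ℝ)) (𝓝 (-f 0)) := hfl.neg
    exact tendsto_nhds_unique (hleft.congr' heq_l) this
  have hf0 : f 0 = 0 := by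
    have : f 0 = -f 0 := hd1 ▸ hd2
    have h2 : (2:ℂ) • f 0 = 0 := by rw [two_smul]; linear_combination this
    simpa using h2
  -- f 0 = ∫ v
  have hint : ∀ u : SchwartzMap ℝ ℝ,
      FourierTransform.fourier (fun x => (u x : ℂ)) 0 = ((∫ x, u x : ℝ) : ℂ) := by
    intro u
    rw [Real.fourier_real_eq]
    simp only [mul_zero, neg_zero, AddChar.map_zero_eq_one, one_smul]
    exact integral_ofReal
  have hIv : (∫ x, v x) = 0 := by
    have := (hint v).symm.trans hf0
    exact_mod_cast this
  have hIw : (∫ x, w x) = 0 := by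
    have h0 : FourierTransform.fourier (fun x => (w x : ℂ)) 0 = 0 := by
      rw [hw 0]; simp
    have := (hint w).symm.trans h0
    exact_mod_cast this
  -- integrate the equation
  have hptw : (fun x => (v x) ^ 2) = fun x => (2*c) * v x + (2*α) * w x := by
    funext x
    have := heq x
    ring_nf
    ring_nf at this
    linarith
  have hIv2int : Integrable (fun x => (v x) ^ 2) := by
    rw [hptw]
    exact ((v.integrable.const_mul (2*c)).add (w.integrable.const_mul (2*α)))
  have hIv2 : (∫ x, (v x) ^ 2) = 0 := by
    rw [hptw, integral_add (v.integrable.const_mul (2*c)) (w.integrable.const_mul (2*α)),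
      integral_const_mul, integral_const_mul, hIv, hIw]
    ring
  have hzero : (fun x => (v x) ^ 2) = fun _ => (0:ℝ) := by
    have hnn : 0 ≤ fun x => (v x) ^ 2 := fun x => sq_nonneg _
    have hae := (integral_eq_zero_iff_of_nonneg hnn hIv2int).mp hIv2
    exact (Continuous.ae_eq_iff_eq volume ((v.continuous).pow 2) continuous_const).mp hae
  intro x
  have := congrFun hzero x
  exact pow_eq_zero_iff (n := 2) (by norm_num) |>.mp this
end
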